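/- arXiv:2207.04421 — 2 statements merged into one kernel-verified Lean document; each statement's English description precedes it below -/
import Mathlib

section
/- Define a^max ∈ ℤ^n by a^max_k = f([k]) − f([k−1]) for each k ∈ [n] (where [0] = ∅). Then for every i ∈ [n] and every integer t with 0 ≤ t ≤ f({i}) − a^max_i, there exists a basis b ∈ PB such that b_k = a^max_k for all k > i and b_i = a^max_i + t. -/
open Finset

variable {n : ℕ}

/-- The set of bases of the integer polymatroid with rank function `f` on ground set `Fin n`:
integer vectors `a` with `a i ≥ 0`, `∑_{i ∈ I} a i ≤ f I` for every `I`, and `∑ i, a i = f [n]`.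
(The upper bound `a i ≤ f {i}` used for the ambient finite set is implied by the constraints.) -/
noncomputable def PB (n : ℕ) (f : Finset (Fin n) → ℕ) : Finset (Fin n → ℤ) :=
  (Fintype.piFinset fun i : Fin n => Finset.Icc (0 : ℤ) (f {i})).filter fun a =>
    (∀ I : Finset (Fin n), ∑ j ∈ I, a j ≤ (f I : ℤ)) ∧ ∑ j, a j = (f Finset.univ : ℤ)

/-- A set `I` is tight for `a` if `∑_{i ∈ I} a i = f I`. -/
def Tight (f : Finset (Fin n) → ℕ) (a : Fin n → ℤ) (I : Finset (Fin n)) : Prop :=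
  ∑ i ∈ I, a i = (f I : ℤ)

/-- `i` is internally active with respect to `a`: `a - e_i + e_j ∉ PB` for every `j < i`. -/
def IntAct (f : Finset (Fin n) → ℕ) (a : Fin n → ℤ) (i : Fin n) : Prop :=
  ∀ j : Fin n, j < i → a - Pi.single i 1 + Pi.single j 1 ∉ PB n f

/-- `i` is externally active with respect to `a`: `a + e_i - e_j ∉ PB` for every `j < i`. -/
def ExtAct (f : Finset (Fin n) → ℕ) (a : Fin n → ℤ) (i : Fin n) : Prop :=
  ∀ j : Fin n, j < i → a + Pi.single i 1 - Pi.single j 1 ∉ PB n f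

open scoped Classical in
/-- `Int(a)`: the set of internally active indices. -/
noncomputable def IntSet (f : Finset (Fin n) → ℕ) (a : Fin n → ℤ) : Finset (Fin n) :=
  Finset.univ.filter fun i => IntAct f a i

open scoped Classical in
/-- `Ext(a)`: the set of externally active indices. -/
noncomputable def ExtSet (f : Finset (Fin n) → ℕ) (a : Fin n → ℤ) : Finset (Fin n) :=
  Finset.univ.filter fun i => ExtAct f a i

/-- `ι(a) = |Int(a)|`, the internal activity. -/
noncomputable def iota (f : Finset (Fin n) → ℕ) (a : Fin n → ℤ) : ℕ := (IntSet f a).card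

/-- `ε(a) = |Ext(a)|`, the external activity. -/
noncomputable def eps (f : Finset (Fin n) → ℕ) (a : Fin n → ℤ) : ℕ := (ExtSet f a).card

/-!
Cap the `i`-th coordinate at `s = a^max_i + t`: the set function
`g I = min (f I) (f (I \ {i}) + s)` is again submodular, `g ≤ f`, and `g = f` on every superset
of `[i]`, because marginals of `f` decrease and `a^max_i ≤ s`. The greedy vector of `g` for the
order `i, 1, 2, …, n` is dominated by `g`, hence by `f`, and has total `g [n] = f [n]`; its
`i`-th entry is `g {i} = s`, and its entries above `i` are the marginals `f [k] - f [k-1]`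
of `f` itself.
-/

open Function

variable {α : Type*}

section Submodular

variable [DecidableEq α]

def IsSubmodular (f : Finset α → ℤ) : Prop :=
  ∀ I J : Finset α, f (I ∪ J) + f (I ∩ J) ≤ f I + f J

theorem IsSubmodular.insert_add_le_add_insert {f : Finset α → ℤ} (hf : IsSubmodular f)
    {A B : Finset α} {i : α} (hAB : A ⊆ B) (hiB : i ∉ B) :
    f (insert i B) + f A ≤ f B + f (insert i A) := by
  have hunion : B ∪ insert i A = insert i B := by grind
  have hinter : B ∩ insert i A = A := by grind
  simpa [hunion, hinter] using hf B (insert i A)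

section Cap

variable (f : Finset α → ℤ) (i : α) (s : ℤ)

/-- The rank function of the polymatroid of `f` cut by the constraint `x i ≤ s`. -/
def capAt (I : Finset α) : ℤ :=
  min (f I) (f (I.erase i) + s)

theorem capAt_le (I : Finset α) : capAt f i s I ≤ f I :=
  min_le_left _ _

theorem capAt_le_erase_add (I : Finset α) : capAt f i s I ≤ f (I.erase i) + s :=
  min_le_right _ _

variable {f i s}

theorem capAt_empty (hf0 : f ∅ = 0) (hs : 0 ≤ s) : capAt f i s ∅ = 0 := by
  simp [capAt, hf0, hs]

theorem capAt_singleton (hf0 : f ∅ = 0) (hs : s ≤ f {i}) : capAt f i s {i} = s := by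
  simp [capAt, hf0, hs]

theorem capAt_eq_of_insert_subset (hf : IsSubmodular f) {A K : Finset α} (hiA : i ∉ A)
    (hs : f (insert i A) - f A ≤ s) (hK : insert i A ⊆ K) : capAt f i s K = f K := by
  have hAK : A ⊆ K.erase i := fun x hx => mem_erase.2 ⟨by grind, hK (mem_insert_of_mem hx)⟩
  have := hf.insert_add_le_add_insert hAK (notMem_erase i K)
  rw [insert_erase (hK (mem_insert_self i A))] at this
  exact min_eq_left (by linarith)

theorem capAt_mono (hf : Monotone f) : Monotone (capAt f i s) := fun _ _ h =>
  min_le_min (hf h) (by have := hf (erase_subset_erase i h); linarith)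

theorem capAt_union_add_inter_le (hf : IsSubmodular f) (I J : Finset α) :
    capAt f i s (I ∪ J) + capAt f i s (I ∩ J) ≤ f I + (f (J.erase i) + s) := by
  have hsub := hf I (J.erase i)
  by_cases hi : i ∈ I
  · have h₁ : I ∪ J.erase i = I ∪ J := by grind
    have h₂ : I ∩ J.erase i = (I ∩ J).erase i := inter_erase i I J
    have := capAt_le f i s (I ∪ J)
    have := capAt_le_erase_add f i s (I ∩ J)
    rw [h₁, h₂] at hsub
    linarith
  · have h₁ : I ∪ J.erase i = (I ∪ J).erase i := by grind
    have h₂ : I ∩ J.erase i = I ∩ J := by grind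
    have := capAt_le_erase_add f i s (I ∪ J)
    have := capAt_le f i s (I ∩ J)
    rw [h₁, h₂] at hsub
    linarith

theorem capAt_submodular (hf : IsSubmodular f) : IsSubmodular (capAt f i s) := by
  intro I J
  obtain hI | hI : capAt f i s I = f I ∨ capAt f i s I = f (I.erase i) + s := min_choice _ _ <;>
  obtain hJ | hJ : capAt f i s J = f J ∨ capAt f i s J = f (J.erase i) + s := min_choice _ _ <;>
  rw [hI, hJ]
  · have := capAt_le f i s (I ∪ J)
    have := capAt_le f i s (I ∩ J)
    linarith [hf I J]
  · exact capAt_union_add_inter_le hf I J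
  · have := capAt_union_add_inter_le (i := i) (s := s) hf J I
    rw [union_comm, inter_comm] at this
    linarith
  · have h₁ := capAt_le_erase_add f i s (I ∪ J)
    have h₂ := capAt_le_erase_add f i s (I ∩ J)
    have hinter : (I ∩ J).erase i = I.erase i ∩ J.erase i := by grind
    rw [erase_union_distrib] at h₁
    rw [hinter] at h₂
    linarith [hf (I.erase i) (J.erase i)]

end Cap

end Submodular

section Greedy

variable {β : Type*} [Fintype α] [LinearOrder β] {κ : α → β} {g : Finset α → ℤ}

def greedyVector (κ : α → β) (g : Finset α → ℤ) (j : α) : ℤ :=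
  g {x | κ x ≤ κ j} - g {x | κ x < κ j}

theorem greedyVector_nonneg (hg : Monotone g) (j : α) : 0 ≤ greedyVector κ g j :=
  sub_nonneg.2 (hg fun _ hx => by simp only [mem_filter] at hx ⊢; exact ⟨hx.1, hx.2.le⟩)

variable [DecidableEq α]

theorem sum_greedyVector_le (hκ : Injective κ) (hg0 : g ∅ = 0) (hg : IsSubmodular g)
    (I : Finset α) : ∑ j ∈ I, greedyVector κ g j ≤ g I := by
  induction I using Finset.strongInduction with
  | H I ih =>
  rcases I.eq_empty_or_nonempty with rfl | hI
  · simp [hg0]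
  obtain ⟨m, hm, hmax⟩ := I.exists_max_image κ hI
  have hunion :
      filter (fun x => κ x < κ m) univ ∪ I = filter (fun x => κ x ≤ κ m) univ := by
    ext x; simp only [mem_union, mem_filter, mem_univ, true_and]
    exact ⟨fun h => h.elim le_of_lt (hmax x), fun h => h.lt_or_eq.imp_right
      fun h => by rw [hκ h]; exact hm⟩
  have hinter : filter (fun x => κ x < κ m) univ ∩ I = I.erase m := by
    ext x; simp only [mem_inter, mem_filter, mem_univ, true_and, mem_erase]
    exact ⟨fun h => ⟨fun hxm => (hxm ▸ h.1).false, h.2⟩,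
      fun h => ⟨(hmax x h.2).lt_of_ne fun he => h.1 (hκ he), h.2⟩⟩
  have := hg (filter (fun x => κ x < κ m) univ) I
  rw [hunion, hinter] at this
  have := ih _ (erase_ssubset hm)
  rw [← add_sum_erase I _ hm, greedyVector]
  linarith

theorem sum_greedyVector_of_lowerClosed (hκ : Injective κ) (hg0 : g ∅ = 0) {I : Finset α}
    (hI : ∀ x ∈ I, ∀ y, κ y ≤ κ x → y ∈ I) :
    ∑ j ∈ I, greedyVector κ g j = g I := by
  induction I using Finset.strongInduction with
  | H I ih =>
  rcases I.eq_empty_or_nonempty with rfl | hne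
  · simp [hg0]
  obtain ⟨m, hm, hmax⟩ := I.exists_max_image κ hne
  have hle : I = filter (fun x => κ x ≤ κ m) univ := by
    ext x; simp only [mem_filter, mem_univ, true_and]
    exact ⟨hmax x, hI m hm x⟩
  have hlt : I.erase m = filter (fun x => κ x < κ m) univ := by
    ext x; simp only [mem_erase, mem_filter, mem_univ, true_and]
    exact ⟨fun h => (hmax x h.2).lt_of_ne fun he => h.1 (hκ he),
      fun h => ⟨fun hxm => (hxm ▸ h).false, hI m hm x h.le⟩⟩
  have hclosed : ∀ x ∈ I.erase m, ∀ y, κ y ≤ κ x → y ∈ I.erase m := by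
    simp only [hlt, mem_filter, mem_univ, true_and]
    exact fun x hx y hy => hy.trans_lt hx
  rw [← add_sum_erase I _ hm, ih _ (erase_ssubset hm) hclosed, greedyVector, ← hle, hlt]
  ring

theorem sum_greedyVector_univ (hκ : Injective κ) (hg0 : g ∅ = 0) :
    ∑ j, greedyVector κ g j = g univ :=
  sum_greedyVector_of_lowerClosed hκ hg0 fun _ _ y _ => mem_univ y

end Greedy

def frontKey (i : Fin n) (j : Fin n) : WithBot (Fin n) :=
  if j = i then ⊥ else j

theorem frontKey_injective (i : Fin n) : Injective (frontKey i) := by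
  intro x y h
  unfold frontKey at h
  split_ifs at h with hx hy hy <;> simp_all

theorem greedyVector_frontKey_self (i : Fin n) (g : Finset (Fin n) → ℤ) :
    greedyVector (frontKey i) g i = g {i} - g ∅ := by
  have hle : ({x | frontKey i x ≤ frontKey i i} : Finset (Fin n)) = {i} := by
    ext x; by_cases hx : x = i <;> simp [frontKey, hx]
  have hlt : ({x | frontKey i x < frontKey i i} : Finset (Fin n)) = ∅ := by
    ext x; simp [frontKey]
  rw [greedyVector, hle, hlt]

theorem greedyVector_frontKey_of_lt {i k : Fin n} (hik : i < k) (g : Finset (Fin n) → ℤ) :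
    greedyVector (frontKey i) g k = g (Iic k) - g (Iio k) := by
  have hle : ({x | frontKey i x ≤ frontKey i k} : Finset (Fin n)) = Iic k := by
    ext x; by_cases hx : x = i <;> simp [frontKey, hx, hik.ne', hik.le]
  have hlt : ({x | frontKey i x < frontKey i k} : Finset (Fin n)) = Iio k := by
    ext x; by_cases hx : x = i <;> simp [frontKey, hx, hik.ne', hik]
  rw [greedyVector, hle, hlt]

theorem mem_PB_of_sum_le {f : Finset (Fin n) → ℕ} {a : Fin n → ℤ} (hnn : ∀ j, 0 ≤ a j)
    (hle : ∀ I, ∑ j ∈ I, a j ≤ f I) (hsum : ∑ j, a j = f univ) : a ∈ PB n f := by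
  refine mem_filter.2 ⟨Fintype.mem_piFinset.2 fun j => mem_Icc.2 ⟨hnn j, ?_⟩, hle, hsum⟩
  simpa using hle {j}

theorem exists_basis_agreeing_above_general
    (n : ℕ) (f : Finset (Fin n) → ℕ)
    (hf0 : f ∅ = 0)
    (hmono : ∀ I J : Finset (Fin n), I ⊆ J → f I ≤ f J)
    (hsub : ∀ I J : Finset (Fin n), f (I ∪ J) + f (I ∩ J) ≤ f I + f J)
    (i : Fin n) (t : ℤ) (ht0 : 0 ≤ t)
    (ht : t ≤ (f {i} : ℤ) - ((f (Finset.Iic i) : ℤ) - (f (Finset.Iio i) : ℤ))) :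
    ∃ b ∈ PB n f,
      (∀ k : Fin n, i < k → b k = (f (Finset.Iic k) : ℤ) - (f (Finset.Iio k) : ℤ)) ∧
      b i = ((f (Finset.Iic i) : ℤ) - (f (Finset.Iio i) : ℤ)) + t := by
  set s := ((f (Iic i) : ℤ) - (f (Iio i) : ℤ)) + t
  have hf_mono : Monotone fun I => (f I : ℤ) := fun I J h => Int.ofNat_le.2 (hmono I J h)
  have hf_sub : IsSubmodular fun I => (f I : ℤ) := fun I J => by
    dsimp only; exact_mod_cast hsub I J
  have hs0 : 0 ≤ s := by have := hmono _ _ (Iio_subset_Iic_self (a := i)); omega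
  set g := capAt (fun I => (f I : ℤ)) i s
  have hg0 : g ∅ = 0 := capAt_empty (by simp [hf0]) hs0
  have hgi : g {i} = s := capAt_singleton (by simp [hf0]) (by omega)
  have hg_eq : ∀ K, Iic i ⊆ K → g K = f K := fun K hK =>
    capAt_eq_of_insert_subset hf_sub notMem_Iio_self (by rw [Iio_insert]; omega)
      (by rwa [Iio_insert])
  have hb_le : ∀ I, ∑ j ∈ I, greedyVector (frontKey i) g j ≤ f I := fun I =>
    (sum_greedyVector_le (frontKey_injective i) hg0 (capAt_submodular hf_sub) I).trans
      (capAt_le _ _ _ I)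
  have hb_sum : ∑ j, greedyVector (frontKey i) g j = f univ :=
    (sum_greedyVector_univ (frontKey_injective i) hg0).trans (hg_eq _ (subset_univ _))
  refine ⟨greedyVector (frontKey i) g,
    mem_PB_of_sum_le (greedyVector_nonneg (capAt_mono hf_mono)) hb_le hb_sum,
    fun k hik => ?_, ?_⟩
  · rw [greedyVector_frontKey_of_lt hik, hg_eq _ (Iic_subset_Iic.2 hik.le),
      hg_eq _ fun x hx => mem_Iio.2 ((mem_Iic.1 hx).trans_lt hik)]
  · rw [greedyVector_frontKey_self, hg0, hgi, sub_zero]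

/-- For each `i` and each `0 ≤ t ≤ f({i}) - a^max_i`, there is a basis agreeing with
`a^max` above `i` and with `i`-th entry `a^max_i + t`. -/
theorem exists_basis_agreeing_above
    (n : ℕ) (hn : 0 < n) (f : Finset (Fin n) → ℕ)
    (hf0 : f ∅ = 0)
    (hmono : ∀ I J : Finset (Fin n), I ⊆ J → f I ≤ f J)
    (hsub : ∀ I J : Finset (Fin n), f (I ∪ J) + f (I ∩ J) ≤ f I + f J)
    (i : Fin n) (t : ℤ) (ht0 : 0 ≤ t)
    (ht : t ≤ (f {i} : ℤ) - ((f (Finset.Iic i) : ℤ) - (f (Finset.Iio i) : ℤ))) :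
    ∃ b ∈ PB n f,
      (∀ k : Fin n, i < k → b k = (f (Finset.Iic k) : ℤ) - (f (Finset.Iio k) : ℤ)) ∧
      b i = ((f (Finset.Iic i) : ℤ) - (f (Finset.Iio i) : ℤ)) + t :=
  exists_basis_agreeing_above_general n f hf0 hmono hsub i t ht0 ht
end

section
/- For each i ∈ [n], the number of bases a ∈ PB whose set of internally active indices is exactly [n] ∖ {i} equals f({i}) − (f([i]) − f([i−1])) (where [0] = ∅). -/
open Finset

variable {n : ℕ}

/-!
The map `a ↦ a i` is a bijection from the bases with `Int(a) = [n] ∖ {i}` onto the integers in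
`(g, f {i}]`, where `g = f [i] - f [i-1]`.

If two bases `a ≠ b` first differ at `k`, with `a k < b k`, basis exchange yields `l > k` with
`b l < a l` and `a - e_l + e_k ∈ PB`, so `l` is not internally active for `a`. Hence a basis is
determined by its `i`-th coordinate once every `j ≠ i` is active, and comparison with the greedy
basis (all indices active, `i`-th coordinate `g`) shows `a i > g` when `i` is not active.
Conversely, if `i` is active the tight sets witnessing it combine into a tight `T ⊇ [i-1]` avoiding
`i`, whence `a i ≤ f (T ∪ {i}) - f T ≤ g`. For surjectivity, when `g ≤ s ≤ f {i}` the greedy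
vector of `I ↦ min (f (I ∖ {i})) (f (I ∪ {i}) - s) + s [i ∈ I]` is a basis with `a i = s` in which
every `j ≠ i` is active.
-/

def Submodular {α β : Type*} [DecidableEq α] [Add β] [LE β] (F : Finset α → β) : Prop :=
  ∀ I J, F (I ∪ J) + F (I ∩ J) ≤ F I + F J

section Submodular

variable {α : Type*} [DecidableEq α]

lemma Submodular.natCast {f : Finset α → ℕ} (hf : Submodular f) :
    Submodular fun I => (f I : ℤ) :=
  fun I J => by dsimp only; exact_mod_cast hf I J

lemma Submodular.insert_add_le {β : Type*} [Add β] [LE β] {F : Finset α → β} (hF : Submodular F)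
    {A B : Finset α} {i : α} (hAB : A ⊆ B) (hiB : i ∉ B) :
    F (insert i B) + F A ≤ F B + F (insert i A) := by
  have h := hF B (insert i A)
  rwa [union_insert, union_eq_left.2 hAB, inter_insert_of_notMem hiB,
    inter_eq_right.2 hAB] at h

end Submodular

section Greedy

variable {α : Type*} [LinearOrder α] [LocallyFiniteOrderBot α]

def greedy (F : Finset α → ℤ) (j : α) : ℤ :=
  F (Iic j) - F (Iio j)

lemma sum_greedy_le {F : Finset α → ℤ} (hF : Submodular F) (s : Finset α) :
    ∑ j ∈ s, greedy F j ≤ F s - F ∅ := by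
  induction s using Finset.induction_on_max with
  | empty => simp
  | insert a s hlt ih =>
    have hdim := hF.insert_add_le (fun x hx => mem_Iio.2 (hlt x hx)) (notMem_Iio_self (b := a))
    rw [Iio_insert] at hdim
    rw [sum_insert fun h => (hlt a h).false, greedy]
    linarith

lemma sum_greedy_of_isLowerSet (F : Finset α → ℤ) {s : Finset α}
    (hs : IsLowerSet (s : Set α)) : ∑ j ∈ s, greedy F j = F s - F ∅ := by
  induction s using Finset.induction_on_max with
  | empty => simp
  | insert a s hlt ih =>
    obtain rfl : s = Iio a := by
      ext x
      refine ⟨fun hx => mem_Iio.2 (hlt x hx), fun hx => ?_⟩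
      have hxa := mem_coe.1 (hs (mem_Iio.1 hx).le (mem_coe.2 (mem_insert_self a s)))
      exact (mem_insert.1 hxa).resolve_left (mem_Iio.1 hx).ne
    rw [sum_insert notMem_Iio_self, ih (by simpa using isLowerSet_Iio a), greedy, Iio_insert]
    ring

lemma sum_greedy_Iic (F : Finset α → ℤ) (j : α) :
    ∑ k ∈ Iic j, greedy F k = F (Iic j) - F ∅ :=
  sum_greedy_of_isLowerSet F (by simpa using isLowerSet_Iic j)

end Greedy

section FixRank

variable {α : Type*} [DecidableEq α] {F : Finset α → ℤ} {i : α} {s : ℤ}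

/-- The rank function of the bases with `a i = s`: on sets avoiding `i` it is
`min (F I) (F (I ∪ {i}) - s)`, and `i` itself contributes exactly `s`. -/
def fixRank (F : Finset α → ℤ) (i : α) (s : ℤ) (I : Finset α) : ℤ :=
  min (F (I.erase i)) (F (insert i I) - s) + if i ∈ I then s else 0

lemma fixRank_empty (hF0 : F ∅ = 0) (hs : s ≤ F {i}) : fixRank F i s ∅ = 0 := by
  simp [fixRank, hF0, hs]

lemma fixRank_le (I : Finset α) : fixRank F i s I ≤ F I := by
  unfold fixRank
  split_ifs with hiI
  · rw [insert_eq_of_mem hiI]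
    linarith [min_le_right (F (I.erase i)) (F I - s)]
  · rw [erase_eq_of_notMem hiI]
    linarith [min_le_left (F I) (F (insert i I) - s)]

lemma monotone_fixRank (hF : Monotone F) (hs : 0 ≤ s) : Monotone (fixRank F i s) := by
  intro I J hIJ
  refine add_le_add (min_le_min (hF (erase_subset_erase i hIJ))
    (sub_le_sub_right (hF (insert_subset_insert i hIJ)) s)) ?_
  split_ifs with hI hJ hJ
  exacts [le_rfl, absurd (hIJ hI) hJ, hs, le_rfl]

lemma submodular_fixRank (hF : Submodular F) (i : α) (s : ℤ) : Submodular (fixRank F i s) := by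
  intro I J
  have hEE : F ((I ∪ J).erase i) + F ((I ∩ J).erase i) ≤ F (I.erase i) + F (J.erase i) := by
    convert hF (I.erase i) (J.erase i) using 4 <;> ext x <;>
      simp only [mem_union, mem_inter, mem_erase] <;> tauto
  have hEI : F (insert i (I ∪ J)) + F ((I ∩ J).erase i) ≤ F (I.erase i) + F (insert i J) := by
    convert hF (I.erase i) (insert i J) using 4 <;> ext x <;> simp only [mem_union, mem_inter,
      mem_erase, mem_insert] <;> tauto
  have hIE : F (insert i (I ∪ J)) + F ((I ∩ J).erase i) ≤ F (insert i I) + F (J.erase i) := by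
    convert hF (insert i I) (J.erase i) using 4 <;> ext x <;> simp only [mem_union, mem_inter,
      mem_erase, mem_insert] <;> tauto
  have hII : F (insert i (I ∪ J)) + F (insert i (I ∩ J)) ≤ F (insert i I) + F (insert i J) := by
    convert hF (insert i I) (insert i J) using 4 <;> ext x <;>
      simp only [mem_union, mem_inter, mem_insert] <;> tauto
  have hind : ((if i ∈ I ∪ J then s else 0) + if i ∈ I ∩ J then s else 0) =
      (if i ∈ I then s else 0) + if i ∈ J then s else 0 := by
    by_cases hI : i ∈ I <;> by_cases hJ : i ∈ J <;> simp [hI, hJ]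
  unfold fixRank
  -- one of the four bounds above applies, whichever way the minima for `I` and `J` are attained
  rcases min_choice (F (I.erase i)) (F (insert i I) - s) with hmI | hmI <;>
  rcases min_choice (F (J.erase i)) (F (insert i J) - s) with hmJ | hmJ <;>
  linarith [min_le_left (F ((I ∪ J).erase i)) (F (insert i (I ∪ J)) - s),
    min_le_right (F ((I ∪ J).erase i)) (F (insert i (I ∪ J)) - s),
    min_le_left (F ((I ∩ J).erase i)) (F (insert i (I ∩ J)) - s),
    min_le_right (F ((I ∩ J).erase i)) (F (insert i (I ∩ J)) - s)]

end FixRank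

section FixRankGreedy

variable {α : Type*} [LinearOrder α] [LocallyFiniteOrderBot α] {F : Finset α → ℤ} {i : α} {s : ℤ}

lemma fixRank_Iic_self (hg : F (Iic i) - F (Iio i) ≤ s) : fixRank F i s (Iic i) = F (Iic i) := by
  rw [fixRank, Iic_erase, insert_eq_of_mem (mem_Iic.2 le_rfl), if_pos (mem_Iic.2 le_rfl),
    min_eq_right (by linarith)]
  ring

lemma fixRank_Iio_self (hg : F (Iic i) - F (Iio i) ≤ s) :
    fixRank F i s (Iio i) = F (Iic i) - s := by
  rw [fixRank, erase_eq_of_notMem notMem_Iio_self, Iio_insert, if_neg notMem_Iio_self,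
    min_eq_right (by linarith)]
  ring

lemma greedy_fixRank_self (hg : F (Iic i) - F (Iio i) ≤ s) : greedy (fixRank F i s) i = s := by
  rw [greedy, fixRank_Iic_self hg, fixRank_Iio_self hg]
  ring

lemma fixRank_univ [Fintype α] (hF : Submodular F) (hg : F (Iic i) - F (Iio i) ≤ s) :
    fixRank F i s univ = F univ := by
  have hdim := hF.insert_add_le (subset_erase.2 ⟨subset_univ _, notMem_Iio_self⟩)
    (notMem_erase i univ)
  rw [insert_erase (mem_univ i), Iio_insert] at hdim
  rw [fixRank, insert_eq_of_mem (mem_univ i), if_pos (mem_univ i), min_eq_right (by linarith)]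
  ring

end FixRankGreedy

lemma sum_sub_single_add_single {ι : Type*} [DecidableEq ι] (a : ι → ℤ) (j k : ι)
    (S : Finset ι) :
    ∑ x ∈ S, (a - Pi.single j 1 + Pi.single k 1 : ι → ℤ) x =
      ∑ x ∈ S, a x - (if j ∈ S then 1 else 0) + if k ∈ S then 1 else 0 := by
  simp only [Pi.add_apply, Pi.sub_apply, sum_add_distrib, sum_sub_distrib, sum_pi_single']

section Bases

variable {f : Finset (Fin n) → ℕ} {a b : Fin n → ℤ}

lemma mem_PB_iff : a ∈ PB n f ↔ (∀ j, 0 ≤ a j) ∧ (∀ I, ∑ j ∈ I, a j ≤ (f I : ℤ)) ∧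
    ∑ j, a j = (f univ : ℤ) := by
  simp only [PB, mem_filter, Fintype.mem_piFinset, mem_Icc]
  refine ⟨fun ⟨h, hI, huniv⟩ => ⟨fun j => (h j).1, hI, huniv⟩,
    fun ⟨h, hI, huniv⟩ => ⟨fun j => ⟨h j, ?_⟩, hI, huniv⟩⟩
  simpa using hI {j}

lemma apply_le_of_mem_PB (ha : a ∈ PB n f) (i : Fin n) : a i ≤ f {i} := by
  simpa using (mem_PB_iff.1 ha).2.1 {i}

lemma sub_single_add_single_notMem_PB {S : Finset (Fin n)} {j k : Fin n} (hS : Tight f a S)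
    (hk : k ∈ S) (hj : j ∉ S) : a - Pi.single j 1 + Pi.single k 1 ∉ PB n f := fun h => by
  have hle := (mem_PB_iff.1 h).2.1 S
  rw [sum_sub_single_add_single, hS, if_neg hj, if_pos hk] at hle
  linarith

lemma sub_single_add_single_mem_PB {j k : Fin n} (ha : a ∈ PB n f) (hj : 0 < a j)
    (hjk : ∀ S, Tight f a S → k ∈ S → j ∈ S) : a - Pi.single j 1 + Pi.single k 1 ∈ PB n f := by
  obtain ⟨hnonneg, hle, huniv⟩ := mem_PB_iff.1 ha
  refine mem_PB_iff.2 ⟨fun x => ?_, fun S => ?_, ?_⟩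
  · have := hnonneg x
    simp only [Pi.add_apply, Pi.sub_apply, Pi.single_apply]
    split_ifs with hxj <;> subst_vars <;> omega
  · rw [sum_sub_single_add_single]
    by_cases hkS : k ∈ S
    · by_cases hjS : j ∈ S
      · simpa [hjS, hkS] using hle S
      · have hlt : ∑ x ∈ S, a x < f S := (hle S).lt_of_ne fun h => hjS (hjk S h hkS)
        simp only [if_pos hkS, if_neg hjS]
        linarith
    · simp only [if_neg hkS]
      split_ifs <;> linarith [hle S]
  · rw [sum_sub_single_add_single, huniv]
    simp

lemma Tight.union (hsub : Submodular f) (ha : a ∈ PB n f) {A B : Finset (Fin n)}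
    (hA : Tight f a A) (hB : Tight f a B) : Tight f a (A ∪ B) := by
  have hle := (mem_PB_iff.1 ha).2.1
  have hAB : (f (A ∪ B) : ℤ) + f (A ∩ B) ≤ f A + f B := by exact_mod_cast hsub A B
  have := sum_union_inter (s₁ := A) (s₂ := B) (f := a)
  unfold Tight at *
  linarith [hle (A ∪ B), hle (A ∩ B)]

lemma Tight.inter (hsub : Submodular f) (ha : a ∈ PB n f) {A B : Finset (Fin n)}
    (hA : Tight f a A) (hB : Tight f a B) : Tight f a (A ∩ B) := by
  have hle := (mem_PB_iff.1 ha).2.1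
  have hAB : (f (A ∪ B) : ℤ) + f (A ∩ B) ≤ f A + f B := by exact_mod_cast hsub A B
  have := sum_union_inter (s₁ := A) (s₂ := B) (f := a)
  unfold Tight at *
  linarith [hle (A ∪ B), hle (A ∩ B)]

lemma exists_tight_superset (hf0 : f ∅ = 0) (hsub : Submodular f) (ha : a ∈ PB n f) {i : Fin n}
    (K : Finset (Fin n)) (hK : ∀ k ∈ K, ∃ S, Tight f a S ∧ k ∈ S ∧ i ∉ S) :
    ∃ T, Tight f a T ∧ K ⊆ T ∧ i ∉ T := by
  induction K using Finset.induction_on with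
  | empty => exact ⟨∅, by simp [Tight, hf0], empty_subset _, notMem_empty i⟩
  | insert k K _ ih =>
    obtain ⟨T, hT, hKT, hiT⟩ := ih fun x hx => hK x (mem_insert_of_mem hx)
    obtain ⟨S, hS, hkS, hiS⟩ := hK k (mem_insert_self k K)
    refine ⟨T ∪ S, hT.union hsub ha hS, insert_subset (mem_union_right T hkS)
      (hKT.trans subset_union_left), ?_⟩
    simpa [hiT] using hiS

lemma exists_least_tight (hsub : Submodular f) (ha : a ∈ PB n f) (k : Fin n) :
    ∃ T, Tight f a T ∧ k ∈ T ∧ ∀ S, Tight f a S → k ∈ S → T ⊆ S := by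
  classical
  obtain ⟨T, hT, hmin⟩ := (univ.filter fun T => Tight f a T ∧ k ∈ T).exists_min_image card
    ⟨univ, mem_filter.2 ⟨mem_univ _, (mem_PB_iff.1 ha).2.2, mem_univ k⟩⟩
  obtain ⟨-, hTt, hkT⟩ := mem_filter.1 hT
  refine ⟨T, hTt, hkT, fun S hS hkS => inter_eq_left.1 ?_⟩
  exact eq_of_subset_of_card_le inter_subset_left
    (hmin _ (mem_filter.2 ⟨mem_univ _, hTt.inter hsub ha hS, mem_inter.2 ⟨hkT, hkS⟩⟩))

lemma exists_exchange (hsub : Submodular f) (ha : a ∈ PB n f) (hb : b ∈ PB n f) {k : Fin n}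
    (hk : a k < b k) : ∃ l, b l < a l ∧ a - Pi.single l 1 + Pi.single k 1 ∈ PB n f := by
  obtain ⟨T, hT, hkT, hleast⟩ := exists_least_tight hsub ha k
  obtain ⟨l, hlT, hl⟩ : ∃ l ∈ T, b l < a l := by
    by_contra! h
    have hab : ∑ x ∈ T, a x < ∑ x ∈ T, b x := sum_lt_sum h ⟨k, hkT, hk⟩
    have hT : ∑ x ∈ T, a x = f T := hT
    linarith [(mem_PB_iff.1 hb).2.1 T]
  exact ⟨l, hl, sub_single_add_single_mem_PB ha ((mem_PB_iff.1 hb).1 l |>.trans_lt hl)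
    fun S hS hkS => hleast S hS hkS hlT⟩

end Bases

section Activity

variable {f : Finset (Fin n) → ℕ} {a b : Fin n → ℤ}

lemma exists_not_intAct_of_lt (hsub : Submodular f) (ha : a ∈ PB n f) (hb : b ∈ PB n f)
    {k : Fin n} (hk : a k < b k) (hbelow : ∀ j < k, a j = b j) :
    ∃ l, b l < a l ∧ ¬IntAct f a l := by
  obtain ⟨l, hl, hmem⟩ := exists_exchange hsub ha hb hk
  have hkl : k < l := by
    rcases lt_trichotomy l k with h | rfl | h
    · exact absurd (hbelow l h) hl.ne'
    · exact absurd hk hl.not_gt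
    · exact h
  exact ⟨l, hl, fun hact => hact k hkl hmem⟩

lemma exists_not_intAct_of_ne (hsub : Submodular f) (ha : a ∈ PB n f) (hb : b ∈ PB n f)
    (hab : a ≠ b) : ∃ l, (b l < a l ∧ ¬IntAct f a l) ∨ (a l < b l ∧ ¬IntAct f b l) := by
  obtain ⟨k, hk, hmin⟩ := wellFounded_lt.has_min {j | a j ≠ b j} (Function.ne_iff.1 hab)
  have hbelow : ∀ j < k, a j = b j := fun j hj => by_contra fun h => hmin j h hj
  rcases lt_or_gt_of_ne hk with h | h
  · obtain ⟨l, hl⟩ := exists_not_intAct_of_lt hsub ha hb h hbelow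
    exact ⟨l, Or.inl hl⟩
  · obtain ⟨l, hl⟩ := exists_not_intAct_of_lt hsub hb ha h fun j hj => (hbelow j hj).symm
    exact ⟨l, Or.inr hl⟩

lemma IntAct.apply_le (hf0 : f ∅ = 0) (hmono : Monotone f) (hsub : Submodular f)
    (ha : a ∈ PB n f) {i : Fin n} (hi : IntAct f a i) :
    a i ≤ (f (Iic i) : ℤ) - f (Iio i) := by
  have hgap : (f (Iio i) : ℤ) ≤ f (Iic i) := by exact_mod_cast hmono Iio_subset_Iic_self
  rcases ((mem_PB_iff.1 ha).1 i).eq_or_lt with h0 | hpos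
  · linarith
  have hcover : ∀ k ∈ Iio i, ∃ S, Tight f a S ∧ k ∈ S ∧ i ∉ S := fun k hk => by
    by_contra! h
    exact hi k (mem_Iio.1 hk) (sub_single_add_single_mem_PB ha hpos h)
  obtain ⟨T, hT, hIioT, hiT⟩ := exists_tight_superset hf0 hsub ha _ hcover
  have hT : ∑ x ∈ T, a x = f T := hT
  have hins := (mem_PB_iff.1 ha).2.1 (insert i T)
  rw [sum_insert hiT] at hins
  have hdim : (f (insert i T) : ℤ) + f (Iio i) ≤ f T + f (Iic i) := by
    rw [← Iio_insert]
    exact_mod_cast hsub.insert_add_le hIioT hiT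
  linarith

lemma greedy_mem_PB {F : Finset (Fin n) → ℤ} (hF0 : F ∅ = 0) (hFmono : Monotone F)
    (hF : Submodular F) (hFf : ∀ I, F I ≤ f I) (hFuniv : F univ = f univ) :
    greedy F ∈ PB n f := by
  refine mem_PB_iff.2 ⟨fun j => sub_nonneg.2 (hFmono Iio_subset_Iic_self), fun I => ?_, ?_⟩
  · linarith [sum_greedy_le hF I, hFf I]
  · rw [sum_greedy_of_isLowerSet F (by simpa using isLowerSet_univ), hF0, hFuniv, sub_zero]

lemma greedy_natCast_mem_PB (hf0 : f ∅ = 0) (hmono : Monotone f) (hsub : Submodular f) :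
    greedy (fun I => (f I : ℤ)) ∈ PB n f :=
  greedy_mem_PB (by simp [hf0]) (Nat.mono_cast.comp hmono) hsub.natCast (fun _ => le_rfl) rfl

lemma intAct_greedy_natCast (hf0 : f ∅ = 0) (j : Fin n) :
    IntAct f (greedy fun I => (f I : ℤ)) j := fun k hkj =>
  sub_single_add_single_notMem_PB (by simp [Tight, sum_greedy_Iic, hf0]) (mem_Iic.2 le_rfl)
    (by simpa using hkj)

lemma Tight.erase_or_insert_of_sum_eq_fixRank {i : Fin n} {s : ℤ} {I : Finset (Fin n)}
    (hai : a i = s) (hI : ∑ x ∈ I, a x = fixRank (fun J => (f J : ℤ)) i s I) :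
    Tight f a (I.erase i) ∨ Tight f a (insert i I) := by
  unfold Tight
  simp only [fixRank] at hI
  by_cases hiI : i ∈ I
  · rw [insert_eq_of_mem hiI] at hI ⊢
    rw [if_pos hiI] at hI
    rw [sum_erase_eq_sub hiI, hai]
    rcases min_choice (f (I.erase i) : ℤ) (f I - s) with h | h <;> rw [h] at hI
    exacts [Or.inl (by linarith), Or.inr (by linarith)]
  · rw [erase_eq_of_notMem hiI] at hI ⊢
    rw [if_neg hiI] at hI
    rw [sum_insert hiI, hai]
    rcases min_choice (f I : ℤ) (f (insert i I) - s) with h | h <;> rw [h] at hI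
    exacts [Or.inl (by linarith), Or.inr (by linarith)]

end Activity

section Count

variable {f : Finset (Fin n) → ℕ} {a b : Fin n → ℤ} {i : Fin n} {s : ℤ}

lemma greedy_fixRank_mem_PB (hf0 : f ∅ = 0) (hmono : Monotone f) (hsub : Submodular f)
    (hs : s ≤ f {i}) (hg : (f (Iic i) : ℤ) - f (Iio i) ≤ s) :
    greedy (fixRank (fun I => (f I : ℤ)) i s) ∈ PB n f := by
  have hgap : (f (Iio i) : ℤ) ≤ f (Iic i) := by exact_mod_cast hmono Iio_subset_Iic_self
  exact greedy_mem_PB (fixRank_empty (by simp [hf0]) hs)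
    (monotone_fixRank (Nat.mono_cast.comp hmono) (by linarith)) (submodular_fixRank hsub.natCast i s)
    fixRank_le (fixRank_univ hsub.natCast hg)

lemma intAct_greedy_fixRank (hf0 : f ∅ = 0) (hs : s ≤ f {i})
    (hg : (f (Iic i) : ℤ) - f (Iio i) ≤ s) {j : Fin n} (hji : j ≠ i) :
    IntAct f (greedy (fixRank (fun I => (f I : ℤ)) i s)) j := by
  intro k hkj
  have hjk : j ∉ Iic k := by simpa using hkj
  have hsum : ∑ x ∈ Iic k, greedy (fixRank (fun I => (f I : ℤ)) i s) x =
      fixRank (fun I => (f I : ℤ)) i s (Iic k) := by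
    rw [sum_greedy_Iic, fixRank_empty (by simp [hf0]) hs, sub_zero]
  by_cases hki : k = i
  · subst hki
    exact sub_single_add_single_notMem_PB (hsum.trans (fixRank_Iic_self hg))
      (mem_Iic.2 le_rfl) hjk
  rcases Tight.erase_or_insert_of_sum_eq_fixRank (greedy_fixRank_self hg) hsum with h | h
  · exact sub_single_add_single_notMem_PB h (mem_erase.2 ⟨hki, mem_Iic.2 le_rfl⟩)
      fun hj => hjk (mem_of_mem_erase hj)
  · exact sub_single_add_single_notMem_PB h (mem_insert_of_mem (mem_Iic.2 le_rfl))
      fun hj => (mem_insert.1 hj).elim hji hjk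

lemma intSet_eq_compl_singleton_iff :
    IntSet f a = univ \ {i} ↔ (∀ j, j ≠ i → IntAct f a j) ∧ ¬IntAct f a i := by
  simp only [IntSet, Finset.ext_iff, mem_filter, mem_univ, true_and, mem_sdiff, mem_singleton]
  exact ⟨fun h => ⟨fun j hj => (h j).2 hj, fun hi => (h i).1 hi rfl⟩,
    fun ⟨hact, hi⟩ j => ⟨fun hj hji => hi (hji ▸ hj), hact j⟩⟩

lemma eq_of_forall_ne_intAct (hsub : Submodular f) (ha : a ∈ PB n f) (hb : b ∈ PB n f)
    (hacta : ∀ j, j ≠ i → IntAct f a j) (hactb : ∀ j, j ≠ i → IntAct f b j) (hab : a i = b i) :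
    a = b := by
  by_contra hne
  obtain ⟨l, ⟨hl, hnl⟩ | ⟨hl, hnl⟩⟩ := exists_not_intAct_of_ne hsub ha hb hne
  · exact hnl (hacta l fun h => hl.ne (h ▸ hab.symm))
  · exact hnl (hactb l fun h => hl.ne (h ▸ hab))

lemma lt_apply_of_not_intAct (hf0 : f ∅ = 0) (hmono : Monotone f) (hsub : Submodular f)
    (ha : a ∈ PB n f) (hact : ∀ j, j ≠ i → IntAct f a j) (hi : ¬IntAct f a i) :
    (f (Iic i) : ℤ) - f (Iio i) < a i := by
  by_contra! hle
  have hG := greedy_natCast_mem_PB hf0 hmono hsub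
  have hne : a ≠ greedy fun I => (f I : ℤ) := fun h => hi (h ▸ intAct_greedy_natCast hf0 i)
  obtain ⟨l, ⟨hl, hnl⟩ | ⟨-, hnl⟩⟩ := exists_not_intAct_of_ne hsub ha hG hne
  · obtain rfl : l = i := by_contra fun h => hnl (hact l h)
    exact hl.not_ge hle
  · exact hnl (intAct_greedy_natCast hf0 l)

end Count

open scoped Classical in
theorem count_intSet_compl_singleton_general
    (n : ℕ) (f : Finset (Fin n) → ℕ)
    (hf0 : f ∅ = 0)
    (hmono : ∀ I J : Finset (Fin n), I ⊆ J → f I ≤ f J)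
    (hsub : ∀ I J : Finset (Fin n), f (I ∪ J) + f (I ∩ J) ≤ f I + f J)
    (i : Fin n) :
    (((PB n f).filter fun a => IntSet f a = Finset.univ \ {i}).card : ℤ) =
      (f {i} : ℤ) - ((f (Finset.Iic i) : ℤ) - (f (Finset.Iio i) : ℤ)) := by
  replace hmono : Monotone f := fun I J => hmono I J
  replace hsub : Submodular f := hsub
  have hg : (f (Iic i) : ℤ) - f (Iio i) ≤ f {i} := by
    have hdim : f (Iic i) ≤ f (Iio i) + f {i} := by
      simpa [Iio_insert, hf0] using hsub.insert_add_le (empty_subset (Iio i)) notMem_Iio_self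
    omega
  rw [← Int.card_Ioc_of_le _ _ hg, Nat.cast_inj]
  refine card_nbij (· i) (fun a ha => ?_) (fun a ha b hb hab => ?_) (fun s hs => ?_)
  · obtain ⟨haPB, hact, hi⟩ := (mem_filter.1 ha).imp_right intSet_eq_compl_singleton_iff.1
    exact mem_Ioc.2 ⟨lt_apply_of_not_intAct hf0 hmono hsub haPB hact hi,
      apply_le_of_mem_PB haPB i⟩
  · obtain ⟨haPB, hacta, -⟩ := (mem_filter.1 ha).imp_right intSet_eq_compl_singleton_iff.1
    obtain ⟨hbPB, hactb, -⟩ := (mem_filter.1 hb).imp_right intSet_eq_compl_singleton_iff.1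
    exact eq_of_forall_ne_intAct hsub haPB hbPB hacta hactb hab
  · obtain ⟨hgs, hs⟩ := mem_Ioc.1 hs
    have hxPB := greedy_fixRank_mem_PB hf0 hmono hsub hs hgs.le
    have hxi := greedy_fixRank_self (F := fun I => (f I : ℤ)) hgs.le
    refine ⟨_, mem_filter.2 ⟨hxPB, intSet_eq_compl_singleton_iff.2 ⟨fun j hj =>
      intAct_greedy_fixRank hf0 hs hgs.le hj, fun hact => ?_⟩⟩, hxi⟩
    linarith [hact.apply_le hf0 hmono hsub hxPB]

open scoped Classical in
/-- The number of bases whose set of internally active indices is exactly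
`[n] ∖ {i}` equals `f({i}) - (f([i]) - f([i-1]))`. -/
theorem count_intSet_compl_singleton
    (n : ℕ) (hn : 0 < n) (f : Finset (Fin n) → ℕ)
    (hf0 : f ∅ = 0)
    (hmono : ∀ I J : Finset (Fin n), I ⊆ J → f I ≤ f J)
    (hsub : ∀ I J : Finset (Fin n), f (I ∪ J) + f (I ∩ J) ≤ f I + f J)
    (i : Fin n) :
    (((PB n f).filter fun a => IntSet f a = Finset.univ \ {i}).card : ℤ) =
      (f {i} : ℤ) - ((f (Finset.Iic i) : ℤ) - (f (Finset.Iio i) : ℤ)) :=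
  count_intSet_compl_singleton_general n f hf0 hmono hsub i
end
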